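/- arXiv:1810.02144 — 3 statements merged into one kernel-verified Lean document; each statement's English description precedes it below -/
import Mathlib

section
/- Let (I, f_{1,∞}) be an m-periodic non-autonomous system on I = [0,1]. If (I, f_{1,∞}) is sensitive, then it is ergodically sensitive: there exists δ > 0 such that for every non-empty open U ⊆ I, the set N(U, δ) = {n : ∃ x, y ∈ U, |f_1^n(x) − f_1^n(y)| > δ} has positive upper density. -/
open Set Filter MeasureTheory TopologicalSpace

/-- `iterN f n = f_{n-1} ∘ ⋯ ∘ f_0`, the `n`-th iterate of the non-autonomous system. -/
def iterN {X : Type*} (f : ℕ → X → X) : ℕ → X → X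
  | 0 => id
  | n + 1 => f n ∘ iterN f n

/-- Topological transitivity of a non-autonomous system. -/
def NATransitive {X : Type*} [TopologicalSpace X] (f : ℕ → X → X) : Prop :=
  ∀ U V : Set X, IsOpen U → IsOpen V → U.Nonempty → V.Nonempty →
    ∃ n : ℕ, 0 < n ∧ (iterN f n '' U ∩ V).Nonempty

/-- Weak mixing (order 2). -/
def NAWeaklyMixing {X : Type*} [TopologicalSpace X] (f : ℕ → X → X) : Prop :=
  ∀ U₁ U₂ V₁ V₂ : Set X, IsOpen U₁ → IsOpen U₂ → IsOpen V₁ → IsOpen V₂ →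
    U₁.Nonempty → U₂.Nonempty → V₁.Nonempty → V₂.Nonempty →
    ∃ n : ℕ, 0 < n ∧ (iterN f n '' U₁ ∩ V₁).Nonempty ∧ (iterN f n '' U₂ ∩ V₂).Nonempty

/-- Weak mixing of order `m`. -/
def NAWeaklyMixingOrder {X : Type*} [TopologicalSpace X] (f : ℕ → X → X) (m : ℕ) : Prop :=
  ∀ U V : Fin m → Set X, (∀ i, IsOpen (U i)) → (∀ i, IsOpen (V i)) →
    (∀ i, (U i).Nonempty) → (∀ i, (V i).Nonempty) →
    ∃ n : ℕ, 0 < n ∧ ∀ i, (iterN f n '' U i ∩ V i).Nonempty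

/-- Banks's condition. -/
def NABanks {X : Type*} [TopologicalSpace X] (f : ℕ → X → X) : Prop :=
  ∀ U V W : Set X, IsOpen U → IsOpen V → IsOpen W →
    U.Nonempty → V.Nonempty → W.Nonempty →
    ∃ n : ℕ, 0 < n ∧ (iterN f n '' U ∩ V).Nonempty ∧ (iterN f n '' U ∩ W).Nonempty

/-- Topological mixing. -/
def NAMixing {X : Type*} [TopologicalSpace X] (f : ℕ → X → X) : Prop :=
  ∀ U V : Set X, IsOpen U → IsOpen V → U.Nonempty → V.Nonempty →
    ∃ N : ℕ, ∀ n ≥ N, (iterN f n '' U ∩ V).Nonempty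

/-- `blockC f s k = f_{s+k-1} ∘ ⋯ ∘ f_s`. -/
def blockC {X : Type*} (f : ℕ → X → X) (s k : ℕ) : X → X :=
  iterN (fun i => f (s + i)) k

/-- The `k`-th iterate system `f_{1,∞}^{[k]}`. -/
def kthSys {X : Type*} (f : ℕ → X → X) (k : ℕ) : ℕ → X → X :=
  fun n => blockC f (n * k) k

/-- The induced non-autonomous system on Borel probability measures (pushforwards). -/
noncomputable def inducedM {X : Type*} [MeasurableSpace X] [TopologicalSpace X]
    [BorelSpace X] (f : ℕ → X → X) (hf : ∀ n, Continuous (f n)) :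
    ℕ → ProbabilityMeasure X → ProbabilityMeasure X :=
  fun n μ => μ.map ((hf n).measurable.aemeasurable)

/-- The induced non-autonomous system on the hyperspace of non-empty compact subsets. -/
def inducedK {X : Type*} [TopologicalSpace X] (f : ℕ → X → X) (hf : ∀ n, Continuous (f n)) :
    ℕ → NonemptyCompacts X → NonemptyCompacts X :=
  fun n K => ⟨⟨f n '' (K : Set X), K.isCompact.image (hf n)⟩, K.nonempty.image _⟩

/-- The set `N(U, δ)` of sensitivity times. -/
def NSet {X : Type*} [PseudoMetricSpace X] (f : ℕ → X → X) (U : Set X) (δ : ℝ) : Set ℕ :=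
  {n | 0 < n ∧ ∃ x ∈ U, ∃ y ∈ U, δ < dist (iterN f n x) (iterN f n y)}

/-- Sensitive dependence on initial conditions. -/
def NASensitive {X : Type*} [PseudoMetricSpace X] (f : ℕ → X → X) : Prop :=
  ∃ δ : ℝ, 0 < δ ∧ ∀ x : X, ∀ U : Set X, IsOpen U → x ∈ U →
    ∃ y ∈ U, ∃ n : ℕ, 0 < n ∧ δ < dist (iterN f n x) (iterN f n y)

/-- A thick subset of ℕ. -/
def ThickSet (S : Set ℕ) : Prop := ∀ p : ℕ, ∃ n : ℕ, ∀ j ≤ p, n + j ∈ S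

/-- A syndetic subset of ℕ. -/
def SyndeticSet (S : Set ℕ) : Prop := ∃ a : ℕ, ∀ i : ℕ, ∃ j, i ≤ j ∧ j ≤ i + a ∧ j ∈ S

/-- Upper density of a subset of ℕ. -/
noncomputable def upperDens (S : Set ℕ) : ℝ :=
  Filter.limsup (fun n : ℕ => (Nat.card ↥(S ∩ Set.Iio n) : ℝ) / n) Filter.atTop

/-- Periodic point of a non-autonomous system. -/
def NAPeriodicPt {X : Type*} (f : ℕ → X → X) (x : X) : Prop :=
  ∃ n : ℕ, 0 < n ∧ ∀ k : ℕ, 0 < k → iterN f (n * k) x = x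


/-! The return map `g = f_m ∘ ⋯ ∘ f_1` is sensitive, because the finitely many maps
`f_r ∘ ⋯ ∘ f_1`, `r < m`, are uniformly equicontinuous. Cover `[0,1]` by finitely many
`ε/4`-balls and let `K` bound, for each of them, an iterate of `g` spreading it beyond `ε`.
A connected subset of `[0,1]` of diameter `> ε` contains one of these balls, so whenever `g^q`
spreads an interval `J` beyond `ε`, so does `g^(q+k)` for some `0 < k ≤ K`. The spreading
times of `J` therefore have gaps at most `K`, and their multiples `q m` lie in `N(J, ε)`,
which hence has positive upper density. -/

open Metric

section Iteration

variable {X : Type*}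

theorem iterN_add (f : ℕ → X → X) (c d : ℕ) :
    iterN f (c + d) = iterN (fun i => f (i + d)) c ∘ iterN f d := by
  induction c with
  | zero => simp [iterN]
  | succ c ih => rw [Nat.add_right_comm, iterN, ih]; rfl

theorem iterN_const (g : X → X) (n : ℕ) : iterN (fun _ => g) n = g^[n] := by
  induction n with
  | zero => rfl
  | succ n ih => rw [iterN, ih, Function.iterate_succ']

theorem iterN_continuous [TopologicalSpace X] {f : ℕ → X → X} (hf : ∀ n, Continuous (f n))
    (n : ℕ) : Continuous (iterN f n) := by
  induction n with
  | zero => exact continuous_id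
  | succ n ih => exact (hf n).comp ih

variable {f : ℕ → X → X} {m : ℕ}

theorem iterN_add_mul_of_periodic (hper : Function.Periodic f m) (c q : ℕ) :
    iterN f (c + q * m) = iterN f c ∘ iterN f (q * m) := by
  rw [iterN_add]
  congr
  funext i
  simpa using hper.nat_mul q i

theorem iterN_mul_of_periodic (hper : Function.Periodic f m) (q : ℕ) :
    iterN f (q * m) = (iterN f m)^[q] := by
  induction q with
  | zero => simp [iterN]
  | succ q ih =>
    rw [Nat.succ_mul, Nat.add_comm, iterN_add_mul_of_periodic hper, ih, Function.iterate_succ']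

end Iteration

section Sensitivity

variable {X : Type*} [PseudoMetricSpace X]

theorem exists_dist_iterN_lt [CompactSpace X] {f : ℕ → X → X} (hf : ∀ n, Continuous (f n))
    (m : ℕ) {δ : ℝ} (hδ : 0 < δ) :
    ∃ η > 0, ∀ r < m, ∀ u v : X, dist u v < η → dist (iterN f r u) (iterN f r v) < δ := by
  have hcont : Continuous fun x (r : Fin m) => iterN f r x :=
    continuous_pi fun r => iterN_continuous hf r
  obtain ⟨η, hη, hunif⟩ := uniformContinuous_iff.mp
    (CompactSpace.uniformContinuous_of_continuous hcont) δ hδ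
  exact ⟨η, hη, fun r hr u v huv =>
    (dist_le_pi_dist _ _ (⟨r, hr⟩ : Fin m)).trans_lt (hunif huv)⟩

theorem NASensitive.iterN_of_periodic [CompactSpace X] {f : ℕ → X → X}
    (hf : ∀ n, Continuous (f n)) {m : ℕ} (hm : 0 < m) (hper : Function.Periodic f m)
    (h : NASensitive f) : NASensitive (fun _ => iterN f m) := by
  obtain ⟨δ, hδ, hsens⟩ := h
  obtain ⟨η, hη, hclose⟩ := exists_dist_iterN_lt hf m hδ
  refine ⟨η / 2, half_pos hη, fun x U hU hx => ?_⟩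
  obtain ⟨y, ⟨hyU, hyx⟩, n, -, hsep⟩ :=
    hsens x (U ∩ ball x (η / 2)) (hU.inter isOpen_ball) ⟨hx, mem_ball_self (half_pos hη)⟩
  rw [← Nat.mod_add_div' n m, iterN_add_mul_of_periodic hper, iterN_mul_of_periodic hper]
    at hsep
  have hfar : η / 2 < dist ((iterN f m)^[n / m] x) ((iterN f m)^[n / m] y) := by
    by_contra! hnear
    exact (hclose _ (Nat.mod_lt n hm) _ _ (by linarith)).not_gt hsep
  refine ⟨y, hyU, n / m, Nat.pos_of_ne_zero fun h0 => ?_, by rwa [iterN_const]⟩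
  rw [h0, Function.iterate_zero_apply, Function.iterate_zero_apply, dist_comm] at hfar
  exact (mem_ball.mp hyx).not_gt hfar

theorem NASensitive.exists_forall_NSet_nonempty {f : ℕ → X → X} (h : NASensitive f) :
    ∃ δ > 0, ∀ U : Set X, IsOpen U → U.Nonempty → (NSet f U δ).Nonempty := by
  obtain ⟨δ, hδ, hsens⟩ := h
  refine ⟨δ, hδ, fun U hU ⟨x, hx⟩ => ?_⟩
  obtain ⟨y, hy, n, hn, hxy⟩ := hsens x U hU hx
  exact ⟨n, hn, x, hx, y, hy, hxy⟩

theorem NSet_mono (f : ℕ → X → X) {U V : Set X} (hUV : U ⊆ V) (δ : ℝ) :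
    NSet f U δ ⊆ NSet f V δ := by
  rintro n ⟨hn, x, hx, y, hy, hxy⟩
  exact ⟨hn, x, hUV hx, y, hUV hy, hxy⟩

theorem add_mem_NSet_of_mem_NSet_image {g : X → X} {U : Set X} {δ : ℝ} {q k : ℕ}
    (hk : k ∈ NSet (fun _ => g) (g^[q] '' U) δ) : q + k ∈ NSet (fun _ => g) U δ := by
  obtain ⟨hk, _, ⟨x, hx, rfl⟩, _, ⟨y, hy, rfl⟩, hxy⟩ := hk
  refine ⟨Nat.add_pos_right q hk, x, hx, y, hy, ?_⟩
  rw [iterN_const] at hxy ⊢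
  rwa [Nat.add_comm, Function.iterate_add_apply, Function.iterate_add_apply]

theorem mul_mem_NSet_of_periodic {f : ℕ → X → X} {m : ℕ} (hm : 0 < m)
    (hper : Function.Periodic f m) {U : Set X} {δ : ℝ} {q : ℕ}
    (hq : q ∈ NSet (fun _ => iterN f m) U δ) : q * m ∈ NSet f U δ := by
  obtain ⟨hq, x, hx, y, hy, hxy⟩ := hq
  refine ⟨Nat.mul_pos hq hm, x, hx, y, hy, ?_⟩
  rwa [iterN_mul_of_periodic hper, ← iterN_const]

end Sensitivity

section Density

theorem card_inter_Iio_le (S : Set ℕ) (n : ℕ) : Nat.card ↥(S ∩ Iio n) ≤ n :=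
  (Nat.card_mono (finite_Iio n) inter_subset_right).trans_eq (by simp)

theorem lt_card_inter_Iio_of_strictMono {S : Set ℕ} {σ : ℕ → ℕ} (hσ : StrictMono σ)
    (hS : ∀ t, σ t ∈ S) (t : ℕ) : t < Nat.card ↥(S ∩ Iio (σ t + 1)) := by
  have : Finite ↥(S ∩ Iio (σ t + 1)) := ((finite_Iio _).subset inter_subset_right).to_subtype
  let emb : Fin (t + 1) → ↥(S ∩ Iio (σ t + 1)) := fun i =>
    ⟨σ i, hS i, Nat.lt_succ_of_le (hσ.monotone (Nat.lt_succ_iff.mp i.2))⟩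
  have hemb : Function.Injective emb := fun i j hij =>
    Fin.ext (hσ.injective (congrArg Subtype.val hij))
  simpa using Nat.card_le_card_of_injective emb hemb

theorem upperDens_pos_of_strictMono {S : Set ℕ} {σ : ℕ → ℕ} {a b : ℕ} (hσ : StrictMono σ)
    (hS : ∀ t, σ t ∈ S) (hlin : ∀ t, σ t ≤ a + t * b) : 0 < upperDens S := by
  have hbdd : IsBoundedUnder (· ≤ ·) atTop fun n : ℕ => (Nat.card ↥(S ∩ Iio n) : ℝ) / n :=
    isBoundedUnder_of ⟨1, fun n =>
      div_le_one_of_le₀ (by exact_mod_cast card_inter_Iio_le S n) n.cast_nonneg⟩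
  have hfreq : ∃ᶠ n in atTop, (1 / (a + b + 1) : ℝ) ≤ (Nat.card ↥(S ∩ Iio n) : ℝ) / n := by
    refine frequently_atTop.2 fun t => ⟨σ t + 1, (hσ.id_le t).trans (Nat.le_succ _), ?_⟩
    have hcard : ((t + 1 : ℕ) : ℝ) ≤ Nat.card ↥(S ∩ Iio (σ t + 1)) := by
      exact_mod_cast lt_card_inter_Iio_of_strictMono hσ hS t
    have hσt : ((σ t + 1 : ℕ) : ℝ) ≤ ((a + b + 1) * (t + 1) : ℕ) := by
      exact_mod_cast (show σ t + 1 ≤ (a + b + 1) * (t + 1) by nlinarith [hlin t])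
    rw [div_le_div_iff₀ (by positivity) (by positivity)]
    push_cast at hcard hσt ⊢
    nlinarith
  exact (by positivity : (0 : ℝ) < 1 / (a + b + 1)).trans_le
    (le_limsup_of_frequently_le hfreq hbdd)

theorem exists_strictMono_of_bounded_gaps {S : Set ℕ} {n₀ K : ℕ} (h₀ : n₀ ∈ S)
    (hgap : ∀ n ∈ S, ∃ k, 0 < k ∧ k ≤ K ∧ n + k ∈ S) :
    ∃ σ : ℕ → ℕ, StrictMono σ ∧ (∀ t, σ t ∈ S) ∧ ∀ t, σ t ≤ n₀ + t * K := by
  choose k hk using fun s : S => hgap s s.2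
  let next : S → S := fun s => ⟨s + k s, (hk s).2.2⟩
  refine ⟨fun t => next^[t] ⟨n₀, h₀⟩, strictMono_nat_of_lt_succ fun t => ?_,
    fun t => (next^[t] _).2, fun t => ?_⟩
  · rw [Function.iterate_succ_apply']
    exact Nat.lt_add_of_pos_right (hk _).1
  · induction t with
    | zero => simp
    | succ t ih =>
      dsimp only at ih ⊢
      rw [Function.iterate_succ_apply']
      have := (hk (next^[t] ⟨n₀, h₀⟩)).2.1
      simp only [next]
      linarith

theorem upperDens_pos_of_bounded_gaps {S T : Set ℕ} {m n₀ K : ℕ} (hm : 0 < m)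
    (hST : ∀ s ∈ S, s * m ∈ T) (h₀ : n₀ ∈ S)
    (hgap : ∀ n ∈ S, ∃ k, 0 < k ∧ k ≤ K ∧ n + k ∈ S) :
    0 < upperDens T := by
  obtain ⟨σ, hσ, hS, hlin⟩ := exists_strictMono_of_bounded_gaps h₀ hgap
  exact upperDens_pos_of_strictMono (a := n₀ * m) (b := K * m) (hσ.mul_const hm)
    (fun t => hST _ (hS t))
    (fun t => (Nat.mul_le_mul_right m (hlin t)).trans_eq (by ring))

end Density

namespace unitInterval

theorem isPreconnected_ball (x : I) (r : ℝ) : IsPreconnected (ball x r) := by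
  refine OrdConnected.isPreconnected ⟨fun a ha b hb w hw => ?_⟩
  simp only [mem_ball, Subtype.dist_eq, Real.dist_eq, abs_lt] at ha hb ⊢
  have haw : (a : ℝ) ≤ w := hw.1
  have hwb : (w : ℝ) ≤ b := hw.2
  constructor <;> linarith

theorem exists_ball_subset_of_isPreconnected {A : Set I} (hA : IsPreconnected A) {a b : I}
    (ha : a ∈ A) (hb : b ∈ A) {ε : ℝ} (hab : ε < dist a b) : ∃ z, ball z (ε / 2) ⊆ A := by
  wlog hle : a ≤ b generalizing a b
  · exact this hb ha (dist_comm a b ▸ hab) (le_of_not_ge hle)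
  have hab' : ε < (b : ℝ) - a := by
    have hle' : (a : ℝ) ≤ b := hle
    rwa [Subtype.dist_eq, Real.dist_eq, abs_sub_comm, abs_of_nonneg (sub_nonneg.2 hle')] at hab
  refine ⟨⟨((a : ℝ) + b) / 2, by constructor <;> linarith [a.2.1, b.2.2, a.2.2, b.2.1]⟩,
    fun w hw => hA.Icc_subset ha hb ?_⟩
  rw [mem_ball, Subtype.dist_eq, Real.dist_eq, abs_lt] at hw
  obtain ⟨hlo, hhi⟩ := hw
  exact ⟨show (a : ℝ) ≤ w by linarith, show (w : ℝ) ≤ b by linarith⟩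

theorem exists_bounded_gaps_NSet {g : I → I} (hg : Continuous g) {ε : ℝ} (hε : 0 < ε)
    (hsens : ∀ U : Set I, IsOpen U → U.Nonempty → (NSet (fun _ => g) U ε).Nonempty) :
    ∃ K, ∀ J : Set I, IsPreconnected J →
      ∀ q ∈ NSet (fun _ => g) J ε, ∃ k, 0 < k ∧ k ≤ K ∧ q + k ∈ NSet (fun _ => g) J ε := by
  have hε4 : 0 < ε / 4 := by positivity
  obtain ⟨C, -, hC, hcover⟩ :=
    finite_cover_balls_of_compact (isCompact_univ : IsCompact (univ : Set I)) hε4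
  choose k hk using fun c : I => hsens (ball c (ε / 4)) isOpen_ball ⟨c, mem_ball_self hε4⟩
  obtain ⟨K, hK⟩ := (hC.image k).bddAbove
  refine ⟨K, fun J hJ q hq => ?_⟩
  obtain ⟨-, x, hx, y, hy, hxy⟩ := hq
  rw [iterN_const] at hxy
  obtain ⟨z, hz⟩ := exists_ball_subset_of_isPreconnected
    (hJ.image _ (hg.iterate q).continuousOn) (mem_image_of_mem _ hx) (mem_image_of_mem _ hy) hxy
  obtain ⟨c, hcC, hzc⟩ := mem_iUnion₂.mp (hcover (mem_univ z))
  have hcell : ball c (ε / 4) ⊆ g^[q] '' J :=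
    (ball_subset_ball' (by rw [dist_comm]; linarith [mem_ball.mp hzc])).trans hz
  exact ⟨k c, (hk c).1, hK (mem_image_of_mem k hcC),
    add_mem_NSet_of_mem_NSet_image (NSet_mono _ hcell _ (hk c))⟩

end unitInterval

/-- an `m`-periodic sensitive non-autonomous system on `[0,1]` is
ergodically sensitive. -/
theorem periodic_interval_sensitive_implies_ergodically_sensitive
    (f : ℕ → unitInterval → unitInterval) (hf : ∀ n, Continuous (f n)) (m : ℕ)
    (hm : 0 < m) (hper : ∀ n, f (n + m) = f n) (h : NASensitive f) :
    ∃ δ : ℝ, 0 < δ ∧ ∀ U : Set unitInterval, IsOpen U → U.Nonempty →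
      0 < upperDens (NSet f U δ) := by
  obtain ⟨ε, hε, hsens⟩ := (h.iterN_of_periodic hf hm hper).exists_forall_NSet_nonempty
  obtain ⟨K, hgap⟩ := unitInterval.exists_bounded_gaps_NSet (iterN_continuous hf m) hε hsens
  refine ⟨ε, hε, fun U hU ⟨x, hx⟩ => ?_⟩
  obtain ⟨r, hr, hball⟩ := isOpen_iff.mp hU x hx
  obtain ⟨n₀, hn₀⟩ := hsens _ isOpen_ball ⟨x, mem_ball_self hr⟩
  exact upperDens_pos_of_bounded_gaps hm
    (fun q hq => mul_mem_NSet_of_periodic hm hper (NSet_mono _ hball _ hq)) hn₀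
    (hgap _ (unitInterval.isPreconnected_ball x r))
end

section
/- Let (X, f_{1,∞}) be an m-periodic non-autonomous system on a compact metric space. If (X, f_{1,∞}) is sensitive, then the autonomous system (X, g), where g = f_m ∘ ⋯ ∘ f_1, is sensitive. -/
open Set Filter MeasureTheory TopologicalSpace

/-!
Write `n = q m + r` with `r < m`, so that by periodicity `f_1^n = f_1^r ∘ g^q`. The finitely
many maps `f_1^r`, `r < m`, are uniformly equicontinuous on the compact space, so there is an
`ε > 0` such that whenever `f_1^n` separates `x` and `y` by more than the sensitivity constant
`δ`, already `g^q` separates them by at least `ε`. Choosing `y` within `ε` of `x` forces `q > 0`.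
-/

section iterN

variable {X : Type*} {f : ℕ → X → X}

theorem continuous_iterN [TopologicalSpace X] (hf : ∀ n, Continuous (f n)) :
    ∀ n, Continuous (iterN f n)
  | 0 => continuous_id
  | n + 1 => (hf n).comp (continuous_iterN hf n)

theorem iterN_add_of_periodic {m : ℕ} (hper : Function.Periodic f m) (n : ℕ) :
    iterN f (n + m) = iterN f n ∘ iterN f m := by
  induction n with
  | zero => simp [iterN]
  | succ n ih =>
    rw [Nat.add_right_comm]
    change f (n + m) ∘ iterN f (n + m) = (f n ∘ iterN f n) ∘ iterN f m
    rw [hper n, ih]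
    rfl

theorem iterN_mul_add_of_periodic {m : ℕ} (hper : Function.Periodic f m) (q r : ℕ) :
    iterN f (q * m + r) = iterN f r ∘ (iterN f m)^[q] := by
  induction q with
  | zero => simp
  | succ q ih =>
    rw [Nat.succ_mul, Nat.add_right_comm, iterN_add_of_periodic hper, ih,
      Function.iterate_succ, Function.comp_assoc]

theorem iterN_eq_comp_iterate_of_periodic {m : ℕ} (hper : Function.Periodic f m) (n : ℕ) :
    iterN f n = iterN f (n % m) ∘ (iterN f m)^[n / m] := by
  rw [← iterN_mul_add_of_periodic hper, Nat.div_add_mod']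

theorem exists_pos_forall_dist_iterN_lt [PseudoMetricSpace X] [CompactSpace X]
    (hf : ∀ n, Continuous (f n)) (m : ℕ) {δ : ℝ} (hδ : 0 < δ) :
    ∃ ε > 0, ∀ r < m, ∀ a b, dist a b < ε → dist (iterN f r a) (iterN f r b) < δ := by
  have hequi : UniformEquicontinuous fun r : Fin m => iterN f r :=
    uniformEquicontinuous_finite.mpr fun r =>
      CompactSpace.uniformContinuous_of_continuous (continuous_iterN hf r)
  obtain ⟨ε, hε, hdist⟩ := Metric.uniformEquicontinuous_iff.mp hequi δ hδ
  exact ⟨ε, hε, fun r hr a b hab => hdist a b hab ⟨r, hr⟩⟩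

theorem le_dist_iterate_of_lt_dist_iterN [PseudoMetricSpace X] {m : ℕ} (hm : 0 < m)
    (hper : Function.Periodic f m) {ε δ : ℝ}
    (hequi : ∀ r < m, ∀ a b, dist a b < ε → dist (iterN f r a) (iterN f r b) < δ)
    {n : ℕ} {x y : X} (hn : δ < dist (iterN f n x) (iterN f n y)) :
    ε ≤ dist ((iterN f m)^[n / m] x) ((iterN f m)^[n / m] y) := by
  by_contra! hclose
  rw [iterN_eq_comp_iterate_of_periodic hper] at hn
  exact (hequi _ (Nat.mod_lt n hm) _ _ hclose).not_gt hn

end iterN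

/-- sensitivity of an `m`-periodic non-autonomous system on a compact
metric space implies sensitivity of the autonomous system `(X, g)`, `g = f_m ∘ ⋯ ∘ f_1`. -/
theorem periodic_sensitive_implies_autonomous_sensitive {X : Type*} [MetricSpace X]
    [CompactSpace X] (f : ℕ → X → X) (hf : ∀ n, Continuous (f n)) (m : ℕ) (hm : 0 < m)
    (hper : ∀ n, f (n + m) = f n) (h : NASensitive f) :
    ∃ δ : ℝ, 0 < δ ∧ ∀ x : X, ∀ U : Set X, IsOpen U → x ∈ U →
      ∃ y ∈ U, ∃ n : ℕ, 0 < n ∧ δ < dist ((iterN f m)^[n] x) ((iterN f m)^[n] y) := by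
  obtain ⟨δ, hδ, hsens⟩ := h
  obtain ⟨ε, hε, hequi⟩ := exists_pos_forall_dist_iterN_lt hf m hδ
  refine ⟨ε / 2, half_pos hε, fun x U hU hx => ?_⟩
  obtain ⟨y, ⟨hyU, hyx⟩, n, -, hn⟩ :=
    hsens x (U ∩ Metric.ball x ε) (hU.inter Metric.isOpen_ball) ⟨hx, Metric.mem_ball_self hε⟩
  have hfar := le_dist_iterate_of_lt_dist_iterN hm hper hequi hn
  have hq : 0 < n / m := Nat.pos_of_ne_zero fun hq => by
    rw [hq] at hfar
    exact (Metric.mem_ball'.mp hyx).not_ge hfar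
  exact ⟨y, hyU, n / m, hq, by linarith⟩
end

section
/- Consider the non-autonomous system on the two-sided shift space Σ_2 = {0,1}^ℤ given by the sequence f_{1,∞} = (σ, σ^{-1}, σ^2, σ^{-2}, σ^3, σ^{-3}, …), where σ is the shift homeomorphism. Then (Σ_2, f_{1,∞}) is weakly mixing, but for every even k ≥ 2 the k-th iterate system f_{1,∞}^{[k]} is not topologically transitive (hence the system is weakly mixing but not totally transitive). -/
open Set Filter MeasureTheory TopologicalSpace

/-- The shift by `k` on the two-sided sequence space `{0,1}^ℤ`. -/
def shiftBy (k : ℤ) : (ℤ → Bool) → (ℤ → Bool) := fun x i => x (i + k)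

/-- The sequence `σ, σ⁻¹, σ², σ⁻², σ³, σ⁻³, …` (indexed from 0). -/
def sigmaSeq : ℕ → (ℤ → Bool) → (ℤ → Bool) := fun n =>
  if n % 2 = 0 then shiftBy (((n / 2 : ℕ) : ℤ) + 1)
  else shiftBy (-(((n / 2 : ℕ) : ℤ) + 1))

lemma shiftBy_comp (a b : ℤ) : shiftBy a ∘ shiftBy b = shiftBy (a + b) := by
  funext x i; simp [shiftBy, add_assoc]

lemma shiftBy_zero : shiftBy 0 = id := by
  funext x i; simp [shiftBy]

lemma iter_parity : ∀ l : ℕ, iterN sigmaSeq (2 * l) = id ∧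
    iterN sigmaSeq (2 * l + 1) = shiftBy ((l : ℤ) + 1) := by
  intro l
  induction l with
  | zero =>
    refine ⟨rfl, ?_⟩
    show sigmaSeq 0 ∘ id = _
    simp [sigmaSeq]
  | succ m ih =>
    have hm1 : (2 * m + 1) % 2 = 1 := by omega
    have hd1 : (2 * m + 1) / 2 = m := by omega
    have hs1 : sigmaSeq (2 * m + 1) = shiftBy (-((m : ℤ) + 1)) := by
      simp [sigmaSeq, hm1, hd1]
    have hm2 : (2 * (m + 1)) % 2 = 0 := by omega
    have hd2 : (2 * (m + 1)) / 2 = m + 1 := by omega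
    have hs2 : sigmaSeq (2 * (m + 1)) = shiftBy ((m : ℤ) + 1 + 1) := by
      simp [sigmaSeq, hm2, hd2]
    have h1 : 2 * (m + 1) = (2 * m + 1) + 1 := by ring
    have he : iterN sigmaSeq (2 * (m + 1)) = id := by
      rw [h1]
      show sigmaSeq (2 * m + 1) ∘ iterN sigmaSeq (2 * m + 1) = id
      rw [ih.2, hs1, shiftBy_comp]
      rw [show -((m : ℤ) + 1) + ((m : ℤ) + 1) = 0 by ring, shiftBy_zero]
    refine ⟨he, ?_⟩
    show sigmaSeq (2 * (m + 1)) ∘ iterN sigmaSeq (2 * (m + 1)) = _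
    rw [he, hs2]
    rw [Function.comp_id]; congr 1

/-- Every open nbhd of a point contains a cylinder. -/
lemma cyl_sub {U : Set (ℤ → Bool)} (hU : IsOpen U) {x : ℤ → Bool} (hx : x ∈ U) :
    ∃ F : Finset ℤ, ∀ y : ℤ → Bool, (∀ i ∈ F, y i = x i) → y ∈ U := by
  obtain ⟨F, u, hu, hsub⟩ := isOpen_pi_iff.mp hU x hx
  exact ⟨F, fun y hy => hsub (fun i hi => (hy i hi) ▸ (hu i hi).2)⟩

/-- shift mixing: eventually `shiftBy m '' U` meets `V`. -/
lemma shift_mix {U V : Set (ℤ → Bool)} (hU : IsOpen U) (hV : IsOpen V)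
    (hUne : U.Nonempty) (hVne : V.Nonempty) :
    ∃ L : ℕ, ∀ m : ℕ, L ≤ m → (shiftBy (m : ℤ) '' U ∩ V).Nonempty := by
  obtain ⟨x, hx⟩ := hUne
  obtain ⟨v, hv⟩ := hVne
  obtain ⟨F, hF⟩ := cyl_sub hU hx
  obtain ⟨G, hG⟩ := cyl_sub hV hv
  refine ⟨(F ×ˢ G).sup (fun p => (p.1 - p.2).toNat) + 1, fun m hm => ?_⟩
  set w : ℤ → Bool := fun j => if j ∈ F then x j else v (j - m) with hw
  have hdisj : ∀ b ∈ G, b + (m : ℤ) ∉ F := by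
    intro b hb hmem
    have : (b + (m : ℤ) - b).toNat ≤ (F ×ˢ G).sup (fun p => (p.1 - p.2).toNat) :=
      Finset.le_sup (f := fun p : ℤ × ℤ => (p.1 - p.2).toNat) (Finset.mk_mem_product hmem hb)
    omega
  refine ⟨shiftBy (m : ℤ) w, ⟨w, hF w (fun i hi => by simp [hw, hi]), rfl⟩, ?_⟩
  apply hG
  intro b hb
  show w (b + (m : ℤ)) = v b
  have hcan : b + (m : ℤ) - m = b := by ring
  simp [hw, hdisj b hb, hcan]

lemma iterN_kthSys {X : Type*} (f : ℕ → X → X) (k : ℕ) :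
    ∀ m : ℕ, iterN (kthSys f k) m = iterN f (m * k) := by
  have block : ∀ s j : ℕ, blockC f s j ∘ iterN f s = iterN f (s + j) := by
    intro s j
    induction j with
    | zero => simp [blockC, iterN]
    | succ i ih =>
      show (f (s + i) ∘ blockC f s i) ∘ iterN f s = iterN f (s + i + 1)
      rw [Function.comp_assoc, ih]
      rfl
  intro m
  induction m with
  | zero => rw [Nat.zero_mul]; rfl
  | succ n ih =>
    show kthSys f k n ∘ iterN (kthSys f k) n = _
    rw [ih, kthSys, block]
    congr 1; ring

/-- the system `(Σ₂, (σ, σ⁻¹, σ², σ⁻², …))` is weakly mixing, but for every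
even `k ≥ 2` its `k`-th iterate system is not topologically transitive. -/
theorem shift_example_weaklyMixing_not_totally_transitive :
    NAWeaklyMixing sigmaSeq ∧
      ∀ k : ℕ, 2 ≤ k → Even k → ¬ NATransitive (kthSys sigmaSeq k) := by
  constructor
  · intro U₁ U₂ V₁ V₂ hU₁ hU₂ hV₁ hV₂ hU₁n hU₂n hV₁n hV₂n
    obtain ⟨L₁, h₁⟩ := shift_mix hU₁ hV₁ hU₁n hV₁n
    obtain ⟨L₂, h₂⟩ := shift_mix hU₂ hV₂ hU₂n hV₂n
    set l := max L₁ L₂ with hl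
    refine ⟨2 * l + 1, by omega, ?_, ?_⟩
    · rw [(iter_parity l).2]
      have := h₁ (l + 1) (by omega)
      rwa [show ((l + 1 : ℕ) : ℤ) = (l : ℤ) + 1 by push_cast; ring] at this
    · rw [(iter_parity l).2]
      have := h₂ (l + 1) (by omega)
      rwa [show ((l + 1 : ℕ) : ℤ) = (l : ℤ) + 1 by push_cast; ring] at this
  · intro k hk hke htrans
    set U : Set (ℤ → Bool) := {y | y 0 = true} with hU
    set V : Set (ℤ → Bool) := {y | y 0 = false} with hV
    have hUo : IsOpen U := by
      have h : U = (fun y : ℤ → Bool => y 0) ⁻¹' {b : Bool | b = true} := rfl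
      rw [h]
      exact IsOpen.preimage (continuous_apply (0 : ℤ)) (isOpen_discrete _)
    have hVo : IsOpen V := by
      have h : V = (fun y : ℤ → Bool => y 0) ⁻¹' {b : Bool | b = false} := rfl
      rw [h]
      exact IsOpen.preimage (continuous_apply (0 : ℤ)) (isOpen_discrete _)
    obtain ⟨n, hn, z, ⟨w, hwU, hwz⟩, hzV⟩ :=
      htrans U V hUo hVo ⟨fun _ => true, rfl⟩ ⟨fun _ => false, rfl⟩
    obtain ⟨j, hj⟩ := hke
    have : iterN (kthSys sigmaSeq k) n = id := by
      rw [iterN_kthSys]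
      have : n * k = 2 * (n * j) := by rw [hj]; ring
      rw [this, (iter_parity (n * j)).1]
    rw [this] at hwz
    simp only [id] at hwz
    subst hwz
    rw [hU] at hwU
    rw [hV] at hzV
    simp at hwU hzV
    rw [hwU] at hzV
    exact Bool.true_eq_false.mp hzV
end
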